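/- Let A = P₁ − R₁ + S₁ = P₂ − R₂ + S₂ be two convergent double weak splittings of type II of a symmetric nonsingular matrix A ∈ ℝ^{n×n}, with iteration matrices W̃₁ and W̃₂ respectively. If R₁P₁⁻¹ ≥ R₂P₂⁻¹ and AP₁⁻¹ ≥ AP₂⁻¹, then ρ(W̃₁) ≤ ρ(W̃₂) < 1. -/

import Mathlib

/-!
Write `W̃ₖ = [[Tₖ, Uₖ], [I, 0]]` with `Tₖ = (RₖPₖ⁻¹)ᵀ ≥ 0` and `Uₖ = (-SₖPₖ⁻¹)ᵀ ≥ 0`. An eigenvector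
of `W̃₁` for `μ` has the form `(μx, x)` with `μ²x = μT₁x + U₁x`, so the triangle inequality gives
`|μ|²|x| ≤ (|μ|T₁ + U₁)|x|`. The identity `t·RP⁻¹ - SP⁻¹ = I - (1 - t)·RP⁻¹ - AP⁻¹` turns the
hypotheses, together with `|μ| ≤ ρ(W̃₁) < 1`, into `|μ|T₁ + U₁ ≤ |μ|T₂ + U₂`. Hence the nonnegative
vector `y = (|μ||x|, |x|)` satisfies `|μ|y ≤ W̃₂y`; iterating gives `|μ|ᵏ ≤ ‖W̃₂ᵏ‖`, and Gelfand's
formula yields `|μ| ≤ ρ(W̃₂)`.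
-/

open Matrix Filter Topology

/-- The spectral radius of a real square matrix: the maximum (supremum) of the
moduli of its complex eigenvalues. -/
noncomputable def specRad {n : Type*} [Fintype n] [DecidableEq n]
    (B : Matrix n n ℝ) : ℝ :=
  sSup ((fun z : ℂ => ‖z‖) '' spectrum ℂ (B.map Complex.ofReal))

/-- Entrywise order on real matrices: `entryLE A B` means every entry of `A` is
at most the corresponding entry of `B`. -/
def entryLE {m n : Type*} (A B : Matrix m n ℝ) : Prop :=
  ∀ i j, A i j ≤ B i j

/-- `X` is the Moore–Penrose inverse of `A`. -/
def IsMoorePenrose {m n : Type*} [Fintype m] [Fintype n]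
    (A : Matrix m n ℝ) (X : Matrix n m ℝ) : Prop :=
  A * X * A = A ∧ X * A * X = X ∧ (A * X)ᵀ = A * X ∧ (X * A)ᵀ = X * A

/-- Iteration matrix of a double weak splitting of type II:
`W̃ = [[(RP⁻¹)ᵀ, −(SP⁻¹)ᵀ],[I, 0]]`. -/
noncomputable def itMatII {n : Type*} [Fintype n] [DecidableEq n]
    (P R S : Matrix n n ℝ) : Matrix (n ⊕ n) (n ⊕ n) ℝ :=
  Matrix.fromBlocks ((R * P⁻¹)ᵀ) (-((S * P⁻¹)ᵀ)) 1 0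

/-- Iteration matrix of a double weak splitting of type I:
`Ŵ = [[P⁻¹R, −P⁻¹S],[I, 0]]`. -/
noncomputable def itMatI {n : Type*} [Fintype n] [DecidableEq n]
    (P R S : Matrix n n ℝ) : Matrix (n ⊕ n) (n ⊕ n) ℝ :=
  Matrix.fromBlocks (P⁻¹ * R) (-(P⁻¹ * S)) 1 0

lemma entryLE.transpose {m n : Type*} {A B : Matrix m n ℝ} (h : entryLE A B) :
    entryLE Aᵀ Bᵀ :=
  fun i j => h j i

lemma entryLE.fromBlocks {l m n o : Type*} {A A' : Matrix n l ℝ} {B B' : Matrix n m ℝ}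
    {C C' : Matrix o l ℝ} {D D' : Matrix o m ℝ} (hA : entryLE A A') (hB : entryLE B B')
    (hC : entryLE C C') (hD : entryLE D D') :
    entryLE (fromBlocks A B C D) (fromBlocks A' B' C' D') := by
  rintro (i | i) (j | j)
  exacts [hA i j, hB i j, hC i j, hD i j]

lemma entryLE_zero_one {m : Type*} [DecidableEq m] : entryLE 0 (1 : Matrix m m ℝ) := by
  intro i j
  rw [Matrix.one_apply]
  split_ifs <;> norm_num

section Nonneg

variable {m n : Type*} [Fintype n]

lemma mulVec_mono_of_entryLE_zero {B : Matrix m n ℝ} (hB : entryLE 0 B) {v w : n → ℝ}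
    (hvw : v ≤ w) : B *ᵥ v ≤ B *ᵥ w :=
  fun i => Finset.sum_le_sum fun j _ => mul_le_mul_of_nonneg_left (hvw j) (hB i j)

lemma mulVec_le_mulVec_of_entryLE {B C : Matrix m n ℝ} (hBC : entryLE B C) {v : n → ℝ}
    (hv : 0 ≤ v) : B *ᵥ v ≤ C *ᵥ v :=
  fun i => Finset.sum_le_sum fun j _ => mul_le_mul_of_nonneg_right (hBC i j) (hv j)

lemma norm_map_ofReal_mulVec_le {B : Matrix m n ℝ} (hB : entryLE 0 B) (w : n → ℂ) (i : m) :
    ‖(B.map Complex.ofReal *ᵥ w) i‖ ≤ (B *ᵥ fun j => ‖w j‖) i := by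
  refine (norm_sum_le _ _).trans_eq (Finset.sum_congr rfl fun j _ => ?_)
  simp only [Matrix.map_apply, norm_mul, Complex.norm_real, Real.norm_of_nonneg (hB i j)]

lemma pi_norm_le_of_nonneg_of_le {v w : n → ℝ} (hv : 0 ≤ v) (hvw : v ≤ w) : ‖v‖ ≤ ‖w‖ :=
  (pi_norm_le_iff_of_nonneg (norm_nonneg w)).mpr fun i => by
    rw [Real.norm_of_nonneg (hv i)]
    exact (hvw i).trans (Real.le_norm_self _ |>.trans (norm_le_pi_norm w i))

end Nonneg

section SpectralRadius

attribute [local instance] Matrix.linftyOpNormedRing Matrix.linftyOpNormedAlgebra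

variable {m : Type*} [Fintype m] [DecidableEq m]

lemma specRad_nonneg (B : Matrix m m ℝ) : 0 ≤ specRad B :=
  Real.sSup_nonneg (by rintro _ ⟨μ, -, rfl⟩; exact norm_nonneg μ)

lemma norm_le_specRad (B : Matrix m m ℝ) {μ : ℂ}
    (hμ : μ ∈ spectrum ℂ (B.map Complex.ofReal)) : ‖μ‖ ≤ specRad B :=
  le_csSup ((spectrum.isCompact _).image continuous_norm).bddAbove ⟨μ, hμ, rfl⟩

lemma mem_spectrum_iff_exists_mulVec_eq_smul (M : Matrix m m ℂ) (μ : ℂ) :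
    μ ∈ spectrum ℂ M ↔ ∃ z, z ≠ 0 ∧ M *ᵥ z = μ • z := by
  rw [← Matrix.spectrum_toLin', ← Module.End.hasEigenvalue_iff_mem_spectrum]
  constructor
  · intro h
    obtain ⟨z, hz⟩ := h.exists_hasEigenvector
    exact ⟨z, hz.2, by simpa using Module.End.mem_eigenspace_iff.mp hz.1⟩
  · rintro ⟨z, hz, hMz⟩
    exact Module.End.hasEigenvalue_of_hasEigenvector
      ⟨Module.End.mem_eigenspace_iff.mpr (by simpa using hMz), hz⟩

lemma specRad_le_of_forall_mulVec_eq_smul (B : Matrix m m ℝ) {c : ℝ} (hc : 0 ≤ c)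
    (h : ∀ (μ : ℂ) (z : m → ℂ), z ≠ 0 → B.map Complex.ofReal *ᵥ z = μ • z → ‖μ‖ ≤ c) :
    specRad B ≤ c := by
  refine Real.sSup_le ?_ hc
  rintro _ ⟨μ, hμ, rfl⟩
  obtain ⟨z, hz, hBz⟩ := (mem_spectrum_iff_exists_mulVec_eq_smul _ μ).mp hμ
  exact h μ z hz hBz

lemma spectralRadius_map_ofReal_le (B : Matrix m m ℝ) :
    spectralRadius ℂ (B.map Complex.ofReal) ≤ ENNReal.ofReal (specRad B) :=
  iSup₂_le fun μ hμ => by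
    rw [← enorm_eq_nnnorm, ← ofReal_norm]
    exact ENNReal.ofReal_le_ofReal (norm_le_specRad B hμ)

lemma linfty_opNorm_map_ofReal (B : Matrix m m ℝ) : ‖B.map Complex.ofReal‖ = ‖B‖ := by
  rw [← coe_nnnorm, ← coe_nnnorm, Matrix.linfty_opNNNorm_def, Matrix.linfty_opNNNorm_def]
  congr 2; ext i; simp [Matrix.map_apply]

lemma le_specRad_of_pow_le_norm_pow (B : Matrix m m ℝ) {c : ℝ} (hc : 0 ≤ c)
    (h : ∀ k, c ^ k ≤ ‖B ^ k‖) : c ≤ specRad B := by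
  rw [← ENNReal.ofReal_le_ofReal_iff (specRad_nonneg B)]
  refine le_trans ?_ (spectralRadius_map_ofReal_le B)
  refine ge_of_tendsto (spectrum.pow_nnnorm_pow_one_div_tendsto_nhds_spectralRadius _) ?_
  filter_upwards [Filter.eventually_ne_atTop 0] with k hk
  rw [one_div, ← ENNReal.pow_rpow_inv_natCast hk (ENNReal.ofReal c)]
  refine ENNReal.rpow_le_rpow ?_ (by positivity)
  have hpow : (B ^ k).map Complex.ofReal = B.map Complex.ofReal ^ k :=
    map_pow Complex.ofRealHom.mapMatrix B k
  rw [← ENNReal.ofReal_pow hc, ← hpow, ← enorm_eq_nnnorm, ← ofReal_norm, linfty_opNorm_map_ofReal]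
  exact ENNReal.ofReal_le_ofReal (h k)

lemma pow_smul_le_pow_mulVec {B : Matrix m m ℝ} (hB : entryLE 0 B) {c : ℝ} (hc : 0 ≤ c)
    {y : m → ℝ} (h : c • y ≤ B *ᵥ y) (k : ℕ) : c ^ k • y ≤ (B ^ k) *ᵥ y := by
  induction k with
  | zero => simp
  | succ k ih =>
    calc c ^ (k + 1) • y = c ^ k • (c • y) := by rw [pow_succ, mul_smul]
      _ ≤ c ^ k • (B *ᵥ y) := smul_le_smul_of_nonneg_left h (pow_nonneg hc k)
      _ = B *ᵥ (c ^ k • y) := (Matrix.mulVec_smul B _ y).symm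
      _ ≤ B *ᵥ (B ^ k *ᵥ y) := mulVec_mono_of_entryLE_zero hB ih
      _ = B ^ (k + 1) *ᵥ y := by rw [Matrix.mulVec_mulVec, pow_succ']

lemma le_specRad_of_smul_le_mulVec {B : Matrix m m ℝ} (hB : entryLE 0 B) {y : m → ℝ}
    (hy : 0 ≤ y) (hy0 : y ≠ 0) {c : ℝ} (h : c • y ≤ B *ᵥ y) : c ≤ specRad B := by
  rcases lt_or_ge c 0 with hc | hc
  · exact hc.le.trans (specRad_nonneg B)
  refine le_specRad_of_pow_le_norm_pow B hc fun k => ?_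
  refine le_of_mul_le_mul_right ?_ (norm_pos_iff.mpr hy0)
  calc c ^ k * ‖y‖ = ‖c ^ k • y‖ := by rw [norm_smul, Real.norm_of_nonneg (pow_nonneg hc k)]
    _ ≤ ‖B ^ k *ᵥ y‖ :=
        pi_norm_le_of_nonneg_of_le (smul_nonneg (pow_nonneg hc k) hy)
          (pow_smul_le_pow_mulVec hB hc h k)
    _ ≤ ‖B ^ k‖ * ‖y‖ := Matrix.linfty_opNorm_mulVec _ _

end SpectralRadius

section Companion

variable {m : Type*} [Fintype m] [DecidableEq m]

lemma norm_eigenvalue_le_specRad_fromBlocks {T₁ U₁ T₂ U₂ : Matrix m m ℝ}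
    (hT₁ : entryLE 0 T₁) (hU₁ : entryLE 0 U₁) (hT₂ : entryLE 0 T₂) (hU₂ : entryLE 0 U₂)
    {μ : ℂ} {z : m ⊕ m → ℂ} (hz : z ≠ 0)
    (hμ : (fromBlocks T₁ U₁ 1 0).map Complex.ofReal *ᵥ z = μ • z)
    (hle : entryLE (‖μ‖ • T₁ + U₁) (‖μ‖ • T₂ + U₂)) :
    ‖μ‖ ≤ specRad (fromBlocks T₂ U₂ 1 0) := by
  rw [Matrix.fromBlocks_map, Matrix.map_one _ Complex.ofReal_zero Complex.ofReal_one,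
    Matrix.map_zero _ Complex.ofReal_zero, Matrix.fromBlocks_mulVec] at hμ
  have hinl : z ∘ Sum.inl = μ • (z ∘ Sum.inr) :=
    funext fun i => by simpa using congrFun hμ (Sum.inr i)
  have htop : μ • (z ∘ Sum.inl) =
      T₁.map Complex.ofReal *ᵥ (z ∘ Sum.inl) + U₁.map Complex.ofReal *ᵥ (z ∘ Sum.inr) :=
    funext fun i => by simpa using (congrFun hμ (Sum.inl i)).symm
  set x := z ∘ Sum.inr
  rw [hinl] at htop
  set v : m → ℝ := fun i => ‖x i‖
  have hv : ‖μ‖ • (‖μ‖ • v) ≤ (‖μ‖ • T₁ + U₁) *ᵥ v := fun i => by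
    calc ‖μ‖ * (‖μ‖ * v i) = ‖(μ • (μ • x)) i‖ := by simp [v]
      _ ≤ (T₁ *ᵥ (‖μ‖ • v)) i + (U₁ *ᵥ v) i := by
          rw [htop]
          refine (norm_add_le _ _).trans (add_le_add ?_ (norm_map_ofReal_mulVec_le hU₁ x i))
          have hμx : (fun j => ‖(μ • x) j‖) = ‖μ‖ • v := by ext j; simp [v]
          simpa only [hμx] using norm_map_ofReal_mulVec_le hT₁ (μ • x) i
      _ = ((‖μ‖ • T₁ + U₁) *ᵥ v) i := by
          simp [Matrix.add_mulVec, Matrix.smul_mulVec, Matrix.mulVec_smul]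
  have hv0 : v ≠ 0 := by
    intro h
    refine hz (funext (Sum.rec (fun i => ?_) (fun i => norm_eq_zero.mp (congrFun h i))))
    simpa [v, norm_eq_zero.mp (congrFun h i)] using congrFun hinl i
  have hW₂ : entryLE 0 (fromBlocks T₂ U₂ 1 0 : Matrix (m ⊕ m) (m ⊕ m) ℝ) := by
    rw [← Matrix.fromBlocks_zero]
    exact entryLE.fromBlocks hT₂ hU₂ entryLE_zero_one fun _ _ => le_rfl
  refine le_specRad_of_smul_le_mulVec hW₂ (y := (‖μ‖ • v) ⊕ᵥ v) ?_ ?_ ?_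
  · rintro (i | i) <;> simp [v, mul_nonneg]
  · exact fun h => hv0 (funext fun i => congrFun h (Sum.inr i))
  · rw [Matrix.fromBlocks_mulVec]
    rintro (i | i)
    · calc (‖μ‖ • ((‖μ‖ • v) ⊕ᵥ v)) (Sum.inl i) = (‖μ‖ • (‖μ‖ • v)) i := rfl
        _ ≤ ((‖μ‖ • T₁ + U₁) *ᵥ v) i := hv i
        _ ≤ ((‖μ‖ • T₂ + U₂) *ᵥ v) i := mulVec_le_mulVec_of_entryLE hle (fun j => norm_nonneg _) i
        _ = _ := by simp [Matrix.add_mulVec, Matrix.smul_mulVec, Matrix.mulVec_smul]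
    · simp

end Companion

theorem specRad_fromBlocks_le_specRad_fromBlocks {m : Type*} [Fintype m] [DecidableEq m]
    {T₁ U₁ T₂ U₂ : Matrix m m ℝ}
    (hT₁ : entryLE 0 T₁) (hU₁ : entryLE 0 U₁) (hT₂ : entryLE 0 T₂) (hU₂ : entryLE 0 U₂)
    (hle : ∀ t, 0 ≤ t → t ≤ specRad (fromBlocks T₁ U₁ 1 0) →
      entryLE (t • T₁ + U₁) (t • T₂ + U₂)) :
    specRad (fromBlocks T₁ U₁ 1 0) ≤ specRad (fromBlocks T₂ U₂ 1 0) :=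
  specRad_le_of_forall_mulVec_eq_smul _ (specRad_nonneg _) fun μ z hz hμ =>
    norm_eigenvalue_le_specRad_fromBlocks hT₁ hU₁ hT₂ hU₂ hz hμ <| hle _ (norm_nonneg μ) <|
      norm_le_specRad _ ((mem_spectrum_iff_exists_mulVec_eq_smul _ μ).mpr ⟨z, hz, hμ⟩)

section Splitting

variable {m : Type*} [Fintype m] [DecidableEq m]

lemma itMatII_eq_fromBlocks (P R S : Matrix m m ℝ) :
    itMatII P R S = fromBlocks (R * P⁻¹)ᵀ (-(S * P⁻¹))ᵀ 1 0 := by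
  rw [itMatII, Matrix.transpose_neg]

lemma smul_mul_inv_add_neg_mul_inv {A P R S : Matrix m m ℝ} (hsplit : A = P - R + S)
    (hP : IsUnit P.det) (t : ℝ) :
    t • (R * P⁻¹) + -(S * P⁻¹) = 1 - (1 - t) • (R * P⁻¹) - A * P⁻¹ := by
  rw [hsplit, Matrix.add_mul, Matrix.sub_mul, Matrix.mul_nonsing_inv _ hP, sub_smul, one_smul]
  abel

end Splitting

theorem stmt10_general {n : ℕ} (A P₁ R₁ S₁ P₂ R₂ S₂ : Matrix (Fin n) (Fin n) ℝ)
    -- two double weak splittings of type II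
    (hsplit₁ : A = P₁ - R₁ + S₁) (hPinv₁ : IsUnit P₁.det)
    (hRP₁ : entryLE 0 (R₁ * P₁⁻¹)) (hSP₁ : entryLE 0 (-(S₁ * P₁⁻¹)))
    (hsplit₂ : A = P₂ - R₂ + S₂) (hPinv₂ : IsUnit P₂.det)
    (hRP₂ : entryLE 0 (R₂ * P₂⁻¹)) (hSP₂ : entryLE 0 (-(S₂ * P₂⁻¹)))
    -- both splittings are convergent
    (hconv₁ : specRad (itMatII P₁ R₁ S₁) < 1)
    (hconv₂ : specRad (itMatII P₂ R₂ S₂) < 1)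
    (hR : entryLE (R₂ * P₂⁻¹) (R₁ * P₁⁻¹)) (hAP : entryLE (A * P₂⁻¹) (A * P₁⁻¹)) :
    specRad (itMatII P₁ R₁ S₁) ≤ specRad (itMatII P₂ R₂ S₂) ∧
      specRad (itMatII P₂ R₂ S₂) < 1 := by
  refine ⟨?_, hconv₂⟩
  simp only [itMatII_eq_fromBlocks] at hconv₁ ⊢
  refine specRad_fromBlocks_le_specRad_fromBlocks hRP₁.transpose hSP₁.transpose
    hRP₂.transpose hSP₂.transpose fun t _ ht => ?_
  rw [← Matrix.transpose_smul, ← Matrix.transpose_add, ← Matrix.transpose_smul,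
    ← Matrix.transpose_add, smul_mul_inv_add_neg_mul_inv hsplit₁ hPinv₁,
    smul_mul_inv_add_neg_mul_inv hsplit₂ hPinv₂]
  refine entryLE.transpose fun i j => ?_
  have hRij := mul_le_mul_of_nonneg_left (hR i j) (sub_nonneg.mpr (ht.trans hconv₁.le))
  simp only [Matrix.sub_apply, Matrix.smul_apply, smul_eq_mul]
  linarith [hAP i j]

theorem stmt10 {n : ℕ} (A P₁ R₁ S₁ P₂ R₂ S₂ : Matrix (Fin n) (Fin n) ℝ)
    (hAsym : Aᵀ = A) (hAinv : IsUnit A.det)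
    -- two double weak splittings of type II
    (hsplit₁ : A = P₁ - R₁ + S₁) (hPinv₁ : IsUnit P₁.det)
    (hRP₁ : entryLE 0 (R₁ * P₁⁻¹)) (hSP₁ : entryLE 0 (-(S₁ * P₁⁻¹)))
    (hsplit₂ : A = P₂ - R₂ + S₂) (hPinv₂ : IsUnit P₂.det)
    (hRP₂ : entryLE 0 (R₂ * P₂⁻¹)) (hSP₂ : entryLE 0 (-(S₂ * P₂⁻¹)))
    -- both splittings are convergent
    (hconv₁ : specRad (itMatII P₁ R₁ S₁) < 1)
    (hconv₂ : specRad (itMatII P₂ R₂ S₂) < 1)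
    (hR : entryLE (R₂ * P₂⁻¹) (R₁ * P₁⁻¹)) (hAP : entryLE (A * P₂⁻¹) (A * P₁⁻¹)) :
    specRad (itMatII P₁ R₁ S₁) ≤ specRad (itMatII P₂ R₂ S₂) ∧
      specRad (itMatII P₂ R₂ S₂) < 1 :=
  stmt10_general A P₁ R₁ S₁ P₂ R₂ S₂ hsplit₁ hPinv₁ hRP₁ hSP₁ hsplit₂ hPinv₂ hRP₂ hSP₂ hconv₁ hconv₂
    hR hAP
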